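/- arXiv:2006.11617 — 2 statements merged into one kernel-verified Lean document; each statement's English description precedes it below -/
import Mathlib

section
/- (Extension lemma.) Suppose Ω : S^{d−1} → G(ℓ,k) and B : S^{d−1} → (ℂ^ℓ)^* are Hölder continuous, and B satisfies the weak cancellation condition ∫_{S^{d−1}} B(ζ)[v] J(ζ) dσ(ζ) = 0 for every v ∈ V := ⋂_{ζ∈S^{d−1}} Ω(ζ). Then there exists a Hölder continuous B̃ : S^{d−1} → (ℂ^ℓ)^* such that B̃(ζ)[v] = B(ζ)[v] for every ζ ∈ S^{d−1} and every v ∈ Ω(ζ), and which satisfies the full cancellation condition ∫_{S^{d−1}} B̃(ζ)[v] J(ζ) dσ(ζ) = 0 for every v ∈ ℂ^ℓ. -/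
open MeasureTheory Metric
open scoped ENNReal

/-- `J(ζ) = ∑ a_j ζ_j²`. -/
def aJ {d : ℕ} (a : Fin d → ℝ) (ζ : EuclideanSpace ℝ (Fin d)) : ℝ :=
  ∑ j, a j * (ζ j) ^ 2

/-- The orthogonal projection of `ℂ^ℓ` onto a subspace, as an endomorphism of `ℂ^ℓ`. -/
noncomputable def sphProj {ℓ : ℕ} (L : Submodule ℂ (EuclideanSpace ℂ (Fin ℓ))) :
    EuclideanSpace ℂ (Fin ℓ) →L[ℂ] EuclideanSpace ℂ (Fin ℓ) :=
  L.subtypeL.comp (L.orthogonalProjectionOnto)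

/-! The extension is `B̃(ζ) = (B(ζ) + S) ∘ π_ζ - S` for a single functional `S`: it agrees with
`B(ζ)` on `Ω(ζ)` and is Hölder as soon as `B` and `π` are. Its cancellation integral at `v` is
`T v - S (Q v)` with `Q = ∫ J (1 - π_ζ)` and `T = ∫ J B(ζ) π_ζ`, so `S` exists iff
`ker Q ⊆ ker T`. Now `re ⟪v, Q v⟫ = ∫ J ‖v - π_ζ v‖²` with `J > 0` and a continuous integrand,
so `Q v = 0` forces `v ∈ Ω(ζ)` for every `ζ`, and then `T v = 0` is the weak cancellation
condition. -/

open Filter Topology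
open scoped InnerProductSpace

/-- Hölder continuity as in the paper: the estimate is only required at distances `≤ 1`
(unlike Mathlib's `HolderOnWith`). -/
def IsHolderOn {X Y : Type*} [PseudoMetricSpace X] [SeminormedAddCommGroup Y]
    (s : Set X) (f : X → Y) : Prop :=
  ∃ C α : ℝ, 0 < α ∧ ∀ x ∈ s, ∀ y ∈ s, dist x y ≤ 1 → ‖f x - f y‖ ≤ C * dist x y ^ α

namespace IsHolderOn

variable {X Y : Type*} [PseudoMetricSpace X] [SeminormedAddCommGroup Y] {s : Set X} {f : X → Y}

theorem continuousOn (hf : IsHolderOn s f) : ContinuousOn f s := by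
  obtain ⟨C, α, hα, hf⟩ := hf
  intro x hx
  have hbound : Tendsto (fun y => C * dist y x ^ α) (𝓝[s] x) (𝓝 0) := by
    have hcont : Continuous fun y => C * dist y x ^ α :=
      ((continuous_id.dist continuous_const).rpow_const fun _ => Or.inr hα.le).const_mul C
    have := hcont.tendsto x
    simpa [Real.zero_rpow hα.ne'] using this.mono_left nhdsWithin_le_nhds
  refine tendsto_iff_norm_sub_tendsto_zero.2 <|
    squeeze_zero' (.of_forall fun _ => norm_nonneg _) ?_ hbound
  filter_upwards [self_mem_nhdsWithin, mem_nhdsWithin_of_mem_nhds (closedBall_mem_nhds x one_pos)]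
    with y hy hy1
  exact hf y hy x hx hy1

theorem add_const (hf : IsHolderOn s f) (c : Y) : IsHolderOn s fun x => f x + c := by
  simpa only [IsHolderOn, add_sub_add_right_eq_sub] using hf

theorem sub_const (hf : IsHolderOn s f) (c : Y) : IsHolderOn s fun x => f x - c := by
  simpa only [IsHolderOn, sub_sub_sub_cancel_right] using hf

theorem of_le_add {C₁ C₂ α₁ α₂ : ℝ} (hα₁ : 0 < α₁) (hα₂ : 0 < α₂)
    (h : ∀ x ∈ s, ∀ y ∈ s, dist x y ≤ 1 → ‖f x - f y‖ ≤ C₁ * dist x y ^ α₁ + C₂ * dist x y ^ α₂) :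
    IsHolderOn s f := by
  refine ⟨max C₁ 0 + max C₂ 0, min α₁ α₂, lt_min hα₁ hα₂, fun x hx y hy hxy => ?_⟩
  have hpow : ∀ {C α : ℝ}, min α₁ α₂ ≤ α → C * dist x y ^ α ≤ max C 0 * dist x y ^ min α₁ α₂ :=
    fun hα => (mul_le_mul_of_nonneg_right (le_max_left _ _) (by positivity)).trans <|
      mul_le_mul_of_nonneg_left
        (Real.rpow_le_rpow_of_exponent_ge' dist_nonneg hxy (lt_min hα₁ hα₂).le hα)
        (le_max_right _ _)
  calc ‖f x - f y‖ ≤ C₁ * dist x y ^ α₁ + C₂ * dist x y ^ α₂ := h x hx y hy hxy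
    _ ≤ _ := by rw [add_mul]; exact add_le_add (hpow (min_le_left _ _)) (hpow (min_le_right _ _))

end IsHolderOn

theorem IsHolderOn.clm_comp {X 𝕜 E F G : Type*} [PseudoMetricSpace X] [NontriviallyNormedField 𝕜]
    [SeminormedAddCommGroup E] [NormedSpace 𝕜 E] [SeminormedAddCommGroup F] [NormedSpace 𝕜 F]
    [SeminormedAddCommGroup G] [NormedSpace 𝕜 G] {s : Set X} (hs : IsCompact s)
    {f : X → F →L[𝕜] G} {g : X → E →L[𝕜] F} (hf : IsHolderOn s f) (hg : IsHolderOn s g) :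
    IsHolderOn s fun x => (f x).comp (g x) := by
  obtain ⟨M, hM⟩ := hs.exists_bound_of_continuousOn hf.continuousOn
  obtain ⟨N, hN⟩ := hs.exists_bound_of_continuousOn hg.continuousOn
  obtain ⟨Cf, αf, hαf, hf⟩ := hf
  obtain ⟨Cg, αg, hαg, hg⟩ := hg
  refine .of_le_add (C₁ := Cf * N) (C₂ := M * Cg) hαf hαg fun x hx y hy hxy => ?_
  have hsplit : (f x).comp (g x) - (f y).comp (g y)
      = (f x - f y).comp (g x) + (f y).comp (g x - g y) := by
    simp only [ContinuousLinearMap.sub_comp, ContinuousLinearMap.comp_sub]; abel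
  calc ‖(f x).comp (g x) - (f y).comp (g y)‖
      ≤ ‖f x - f y‖ * ‖g x‖ + ‖f y‖ * ‖g x - g y‖ := by
        rw [hsplit]
        exact (norm_add_le _ _).trans (add_le_add (ContinuousLinearMap.opNorm_comp_le _ _)
          (ContinuousLinearMap.opNorm_comp_le _ _))
    _ ≤ Cf * dist x y ^ αf * N + M * (Cg * dist x y ^ αg) := by
        gcongr
        · exact (norm_nonneg _).trans (hf x hx y hy hxy)
        · exact hf x hx y hy hxy
        · exact hN x hx
        · exact (norm_nonneg _).trans (hM x hx)
        · exact hM y hy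
        · exact hg x hx y hy hxy
    _ = Cf * N * dist x y ^ αf + M * Cg * dist x y ^ αg := by ring

theorem Submodule.re_inner_sub_starProjection {𝕜 E : Type*} [RCLike 𝕜] [NormedAddCommGroup E]
    [InnerProductSpace 𝕜 E] (K : Submodule 𝕜 E) [K.HasOrthogonalProjection] (v : E) :
    RCLike.re ⟪v, v - K.starProjection v⟫_𝕜 = ‖v - K.starProjection v‖ ^ 2 := by
  have horth : ⟪K.starProjection v, v - K.starProjection v⟫_𝕜 = 0 :=
    inner_eq_zero_symm.1 (K.starProjection_inner_eq_zero v _ (K.starProjection_apply_mem v))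
  calc RCLike.re ⟪v, v - K.starProjection v⟫_𝕜
      = RCLike.re ⟪v - K.starProjection v + K.starProjection v, v - K.starProjection v⟫_𝕜 := by
        rw [sub_add_cancel]
    _ = ‖v - K.starProjection v‖ ^ 2 := by
        rw [inner_add_left, horth, add_zero, inner_self_eq_norm_sq]

theorem ContinuousLinearMap.exists_comp_eq_of_ker_le {𝕜 E F : Type*} [NontriviallyNormedField 𝕜]
    [CompleteSpace 𝕜] [NormedAddCommGroup E] [NormedSpace 𝕜 E] [NormedAddCommGroup F]
    [NormedSpace 𝕜 F] [FiniteDimensional 𝕜 F] (Q : E →L[𝕜] F) (T : E →L[𝕜] 𝕜)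
    (h : Q.ker ≤ T.ker) : ∃ S : F →L[𝕜] 𝕜, S.comp Q = T := by
  have hT : (T : E →ₗ[𝕜] 𝕜) ∈ LinearMap.range (Q : E →ₗ[𝕜] F).dualMap := by
    rw [LinearMap.range_dualMap_eq_dualAnnihilator_ker, Submodule.mem_dualAnnihilator]
    exact fun v hv => h hv
  obtain ⟨S, hS⟩ := hT
  exact ⟨LinearMap.toContinuousLinearMap S, ContinuousLinearMap.ext (LinearMap.congr_fun hS)⟩

section WeightedProjections

variable {X 𝕜 H : Type*} [TopologicalSpace X] [CompactSpace X] [MeasurableSpace X]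
  [OpensMeasurableSpace X] {μ : Measure X} [IsFiniteMeasure μ]
  [RCLike 𝕜] [NormedAddCommGroup H] [InnerProductSpace 𝕜 H] [FiniteDimensional 𝕜 H]
  [NormedSpace ℝ H] {w : X → ℝ} {P : X → Submodule 𝕜 H}

theorem Continuous.integrable_of_compactSpace {E : Type*} [NormedAddCommGroup E] {f : X → E}
    (hf : Continuous f) : Integrable f μ :=
  hf.integrable_of_hasCompactSupport (.of_compactSpace f)

theorem mem_of_integral_smul_sub_starProjection_eq_zero [μ.IsOpenPosMeasure]
    (hw : Continuous w) (hw_pos : ∀ x, 0 < w x) (hP : Continuous fun x => (P x).starProjection)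
    {v : H} (hv : ∫ x, (w x : 𝕜) • (v - (P x).starProjection v) ∂μ = 0) (x : X) : v ∈ P x := by
  have := FiniteDimensional.complete 𝕜 H
  set g : X → ℝ := fun x => w x * ‖v - (P x).starProjection v‖ ^ 2
  have hg : Continuous g :=
    hw.mul ((continuous_const.sub (hP.clm_apply continuous_const)).norm.pow 2)
  have hg_int : ∫ x, g x ∂μ = 0 := by
    have hint : Integrable (fun x => (w x : 𝕜) • (v - (P x).starProjection v)) μ :=
      ((RCLike.continuous_ofReal.comp hw).smul
        (continuous_const.sub (hP.clm_apply continuous_const))).integrable_of_compactSpace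
    calc ∫ x, g x ∂μ = ∫ x, RCLike.re ⟪v, (w x : 𝕜) • (v - (P x).starProjection v)⟫_𝕜 ∂μ := by
          congr 1 with x
          rw [inner_smul_real_right, RCLike.smul_re, Submodule.re_inner_sub_starProjection]
      _ = RCLike.re ⟪v, ∫ x, (w x : 𝕜) • (v - (P x).starProjection v) ∂μ⟫_𝕜 := by
          rw [integral_re (hint.const_inner v), integral_inner hint]
      _ = 0 := by rw [hv, inner_zero_right, map_zero]
  have hg_zero : g = 0 := by
    refine (hg.ae_eq_iff_eq μ continuous_const).1 ?_
    exact (integral_eq_zero_iff_of_nonneg (fun x => mul_nonneg (hw_pos x).le (sq_nonneg _))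
      hg.integrable_of_compactSpace).1 hg_int
  have hx : w x * ‖v - (P x).starProjection v‖ ^ 2 = 0 := congr_fun hg_zero x
  rw [mul_eq_zero, pow_eq_zero_iff two_ne_zero, norm_eq_zero, sub_eq_zero] at hx
  exact Submodule.starProjection_eq_self_iff.1 (hx.resolve_left (hw_pos x).ne').symm

theorem exists_integral_add_comp_starProjection_sub_mul_eq_zero [μ.IsOpenPosMeasure]
    (hw : Continuous w) (hw_pos : ∀ x, 0 < w x)
    (hP : Continuous fun x => (P x).starProjection) {B : X → H →L[𝕜] 𝕜} (hB : Continuous B)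
    (hweak : ∀ v, (∀ x, v ∈ P x) → ∫ x, B x v * (w x : 𝕜) ∂μ = 0) :
    ∃ S : H →L[𝕜] 𝕜, ∀ v,
      ∫ x, ((B x + S).comp (P x).starProjection - S) v * (w x : 𝕜) ∂μ = 0 := by
  have := FiniteDimensional.complete 𝕜 H
  have hw𝕜 : Continuous fun x => (w x : 𝕜) := RCLike.continuous_ofReal.comp hw
  set Q : H →L[𝕜] H := ∫ x, (w x : 𝕜) • (ContinuousLinearMap.id 𝕜 H - (P x).starProjection) ∂μ
  set T : H →L[𝕜] 𝕜 := ∫ x, (w x : 𝕜) • (B x).comp (P x).starProjection ∂μ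
  have hQ_int : Integrable
      (fun x => (w x : 𝕜) • (ContinuousLinearMap.id 𝕜 H - (P x).starProjection)) μ :=
    (hw𝕜.smul (continuous_const.sub hP)).integrable_of_compactSpace
  have hT_int : Integrable (fun x => (w x : 𝕜) • (B x).comp (P x).starProjection) μ :=
    (hw𝕜.smul (hB.clm_comp hP)).integrable_of_compactSpace
  have hQ : ∀ v, Q v = ∫ x, (w x : 𝕜) • (v - (P x).starProjection v) ∂μ := fun v => by
    rw [ContinuousLinearMap.integral_apply hQ_int]; rfl
  have hT : ∀ v, T v = ∫ x, B x ((P x).starProjection v) * (w x : 𝕜) ∂μ := fun v => by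
    rw [ContinuousLinearMap.integral_apply hT_int]
    simp [mul_comm]
  have hker : Q.ker ≤ T.ker := fun v hv => by
    have hmem := mem_of_integral_smul_sub_starProjection_eq_zero hw hw_pos hP
      ((hQ v).symm.trans hv)
    rw [LinearMap.mem_ker, ContinuousLinearMap.coe_coe, hT]
    simp only [Submodule.starProjection_eq_self_iff.2 (hmem _)]
    exact hweak v hmem
  obtain ⟨S, hS⟩ := Q.exists_comp_eq_of_ker_le T hker
  refine ⟨S, fun v => ?_⟩
  have hcorr_int : Integrable (fun x => (w x : 𝕜) • (v - (P x).starProjection v)) μ :=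
    (hw𝕜.smul (continuous_const.sub (hP.clm_apply continuous_const))).integrable_of_compactSpace
  have hmain_int : Integrable (fun x => B x ((P x).starProjection v) * (w x : 𝕜)) μ :=
    ((hB.clm_apply (hP.clm_apply continuous_const)).mul hw𝕜).integrable_of_compactSpace
  calc ∫ x, ((B x + S).comp (P x).starProjection - S) v * (w x : 𝕜) ∂μ
      = ∫ x, B x ((P x).starProjection v) * (w x : 𝕜)
          - S ((w x : 𝕜) • (v - (P x).starProjection v)) ∂μ :=
        integral_congr_ae (.of_forall fun x => by
          simp only [sub_apply, add_apply, ContinuousLinearMap.comp_apply, map_smul, map_sub,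
            smul_eq_mul]
          ring)
    _ = T v - S (Q v) := by
        rw [integral_sub hmain_int (S.integrable_comp hcorr_int), S.integral_comp_comm hcorr_int,
          hT, hQ]
    _ = 0 := by rw [← ContinuousLinearMap.comp_apply, hS, sub_self]

end WeightedProjections

theorem continuous_aJ {d : ℕ} (a : Fin d → ℝ) : Continuous (aJ a) :=
  continuous_finsetSum _ fun j _ => continuous_const.mul ((EuclideanSpace.proj j).continuous.pow 2)

theorem aJ_pos {d : ℕ} {a : Fin d → ℝ} (ha : ∀ j, 0 < a j) {ζ : EuclideanSpace ℝ (Fin d)}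
    (hζ : ζ ≠ 0) : 0 < aJ a ζ := by
  obtain ⟨j, hj⟩ : ∃ j, ζ j ≠ 0 := by
    by_contra! h
    exact hζ (PiLp.ext h)
  exact Finset.sum_pos' (fun i _ => mul_nonneg (ha i).le (sq_nonneg _))
    ⟨j, Finset.mem_univ j, mul_pos (ha j) (sq_pos_of_ne_zero hj)⟩

theorem statement5_general (d ℓ : ℕ)
    (a : Fin d → ℝ) (hapos : ∀ j, 0 < a j)
    (Ω : EuclideanSpace ℝ (Fin d) → Submodule ℂ (EuclideanSpace ℂ (Fin ℓ)))
    (hΩHolder : ∃ C α : ℝ, 0 < α ∧ ∀ ζ₁ ∈ sphere (0 : EuclideanSpace ℝ (Fin d)) 1,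
      ∀ ζ₂ ∈ sphere (0 : EuclideanSpace ℝ (Fin d)) 1, dist ζ₁ ζ₂ ≤ 1 →
        ‖sphProj (Ω ζ₁) - sphProj (Ω ζ₂)‖ ≤ C * dist ζ₁ ζ₂ ^ α)
    (B : EuclideanSpace ℝ (Fin d) → (EuclideanSpace ℂ (Fin ℓ) →L[ℂ] ℂ))
    (hBHolder : ∃ C α : ℝ, 0 < α ∧ ∀ ζ₁ ∈ sphere (0 : EuclideanSpace ℝ (Fin d)) 1,
      ∀ ζ₂ ∈ sphere (0 : EuclideanSpace ℝ (Fin d)) 1, dist ζ₁ ζ₂ ≤ 1 →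
        ‖B ζ₁ - B ζ₂‖ ≤ C * dist ζ₁ ζ₂ ^ α)
    (hweak : ∀ v : EuclideanSpace ℂ (Fin ℓ),
      (∀ ζ ∈ sphere (0 : EuclideanSpace ℝ (Fin d)) 1, v ∈ Ω ζ) →
      ∫ ζ : sphere (0 : EuclideanSpace ℝ (Fin d)) 1,
          B (ζ : EuclideanSpace ℝ (Fin d)) v * ((aJ a (ζ : EuclideanSpace ℝ (Fin d)) : ℝ) : ℂ)
        ∂(volume : Measure (EuclideanSpace ℝ (Fin d))).toSphere = 0) :
    ∃ Btilde : EuclideanSpace ℝ (Fin d) → (EuclideanSpace ℂ (Fin ℓ) →L[ℂ] ℂ),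
      (∃ C α : ℝ, 0 < α ∧ ∀ ζ₁ ∈ sphere (0 : EuclideanSpace ℝ (Fin d)) 1,
        ∀ ζ₂ ∈ sphere (0 : EuclideanSpace ℝ (Fin d)) 1, dist ζ₁ ζ₂ ≤ 1 →
          ‖Btilde ζ₁ - Btilde ζ₂‖ ≤ C * dist ζ₁ ζ₂ ^ α) ∧
      (∀ ζ ∈ sphere (0 : EuclideanSpace ℝ (Fin d)) 1,
        ∀ v ∈ Ω ζ, Btilde ζ v = B ζ v) ∧
      (∀ v : EuclideanSpace ℂ (Fin ℓ),
        ∫ ζ : sphere (0 : EuclideanSpace ℝ (Fin d)) 1,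
            Btilde (ζ : EuclideanSpace ℝ (Fin d)) v *
              ((aJ a (ζ : EuclideanSpace ℝ (Fin d)) : ℝ) : ℂ)
          ∂(volume : Measure (EuclideanSpace ℝ (Fin d))).toSphere = 0) := by
  obtain ⟨S, hS⟩ := exists_integral_add_comp_starProjection_sub_mul_eq_zero
    (μ := (volume : Measure (EuclideanSpace ℝ (Fin d))).toSphere)
    ((continuous_aJ a).comp continuous_subtype_val)
    (fun ζ => aJ_pos hapos (ne_zero_of_mem_unit_sphere ζ))
    (IsHolderOn.continuousOn (f := fun ζ => sphProj (Ω ζ)) hΩHolder).domRestrict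
    (IsHolderOn.continuousOn (f := B) hBHolder).domRestrict
    (fun v hv => hweak v fun ζ hζ => hv ⟨ζ, hζ⟩)
  refine ⟨fun ζ => (B ζ + S).comp (sphProj (Ω ζ)) - S, ?_, fun ζ _ v hv => ?_, hS⟩
  · exact ((IsHolderOn.add_const (f := B) hBHolder S).clm_comp (isCompact_sphere 0 1)
      hΩHolder).sub_const S
  · simp [sphProj, Submodule.starProjection_eq_self_iff.2 hv]

/-- (Extension lemma.) If `B` is a Hölder continuous field of linear
functionals satisfying the weak cancellation condition with respect to `Ω`, then it admits
a Hölder continuous extension `B̃` to functionals on all of `ℂ^ℓ` satisfying the full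
cancellation condition `∫_{S^{d-1}} B̃(ζ)[v] J(ζ) dσ(ζ) = 0` for every `v ∈ ℂ^ℓ`. -/
theorem statement5 (d ℓ k : ℕ) (hd : 2 ≤ d) (hk1 : 1 ≤ k) (hkl : k ≤ ℓ)
    (a : Fin d → ℝ) (hapos : ∀ j, 0 < a j) (hasum : ∑ j, a j = d)
    (Ω : EuclideanSpace ℝ (Fin d) → Submodule ℂ (EuclideanSpace ℂ (Fin ℓ)))
    (hrank : ∀ ζ ∈ sphere (0 : EuclideanSpace ℝ (Fin d)) 1, Module.finrank ℂ (Ω ζ) = k)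
    (hΩHolder : ∃ C α : ℝ, 0 < α ∧ ∀ ζ₁ ∈ sphere (0 : EuclideanSpace ℝ (Fin d)) 1,
      ∀ ζ₂ ∈ sphere (0 : EuclideanSpace ℝ (Fin d)) 1, dist ζ₁ ζ₂ ≤ 1 →
        ‖sphProj (Ω ζ₁) - sphProj (Ω ζ₂)‖ ≤ C * dist ζ₁ ζ₂ ^ α)
    (B : EuclideanSpace ℝ (Fin d) → (EuclideanSpace ℂ (Fin ℓ) →L[ℂ] ℂ))
    (hBHolder : ∃ C α : ℝ, 0 < α ∧ ∀ ζ₁ ∈ sphere (0 : EuclideanSpace ℝ (Fin d)) 1,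
      ∀ ζ₂ ∈ sphere (0 : EuclideanSpace ℝ (Fin d)) 1, dist ζ₁ ζ₂ ≤ 1 →
        ‖B ζ₁ - B ζ₂‖ ≤ C * dist ζ₁ ζ₂ ^ α)
    (hweak : ∀ v : EuclideanSpace ℂ (Fin ℓ),
      (∀ ζ ∈ sphere (0 : EuclideanSpace ℝ (Fin d)) 1, v ∈ Ω ζ) →
      ∫ ζ : sphere (0 : EuclideanSpace ℝ (Fin d)) 1,
          B (ζ : EuclideanSpace ℝ (Fin d)) v * ((aJ a (ζ : EuclideanSpace ℝ (Fin d)) : ℝ) : ℂ)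
        ∂(volume : Measure (EuclideanSpace ℝ (Fin d))).toSphere = 0) :
    ∃ Btilde : EuclideanSpace ℝ (Fin d) → (EuclideanSpace ℂ (Fin ℓ) →L[ℂ] ℂ),
      (∃ C α : ℝ, 0 < α ∧ ∀ ζ₁ ∈ sphere (0 : EuclideanSpace ℝ (Fin d)) 1,
        ∀ ζ₂ ∈ sphere (0 : EuclideanSpace ℝ (Fin d)) 1, dist ζ₁ ζ₂ ≤ 1 →
          ‖Btilde ζ₁ - Btilde ζ₂‖ ≤ C * dist ζ₁ ζ₂ ^ α) ∧
      (∀ ζ ∈ sphere (0 : EuclideanSpace ℝ (Fin d)) 1,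
        ∀ v ∈ Ω ζ, Btilde ζ v = B ζ v) ∧
      (∀ v : EuclideanSpace ℂ (Fin ℓ),
        ∫ ζ : sphere (0 : EuclideanSpace ℝ (Fin d)) 1,
            Btilde (ζ : EuclideanSpace ℝ (Fin d)) v *
              ((aJ a (ζ : EuclideanSpace ℝ (Fin d)) : ℝ) : ℂ)
          ∂(volume : Measure (EuclideanSpace ℝ (Fin d))).toSphere = 0) :=
  statement5_general d ℓ a hapos Ω hΩHolder B hBHolder hweak
end

section
/- (Integration of truncated a-homogeneous functions.) Let Φ : ℝ^d∖{0} → ℂ be continuous and a-homogeneous of order m ∈ ℝ. Then for all 0 < ε < R, ∫_{{ξ : ε ≤ η(ξ) ≤ R}} Φ(ξ) dξ = (∫_ε^R r^{m+d−1} dr) · ∫_{S^{d−1}} J(ζ) Φ(ζ) dσ(ζ). In particular, for m = −d the first factor equals log(R/ε). -/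
/-!
The map `G x = (‖x‖ ^ (a_j - 1) * x_j)_j` satisfies `G (r • ζ) = Dil_{r⁻¹} ζ` for unit `ζ`, so
`η (G x) = ‖x‖` and `G` is a bijection from the Euclidean annulus `ε ≤ ‖x‖ ≤ R` onto
`ε ≤ η ≤ R`. Its derivative is a diagonal matrix times a rank-one perturbation of the identity,
with determinant `‖x‖ ^ (∑ (a_j - 1)) * J x / ‖x‖ ^ 2 = J x / ‖x‖ ^ 2` since `∑ a_j = d`.
After changing variables by `G` and passing to polar coordinates `x = r • ζ`, the integrand
`J (r • ζ) / r ^ 2 * Φ (Dil_{r⁻¹} ζ) = r ^ m * J ζ * Φ ζ` separates, and the radial measure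
`r ^ (d - 1) dr` produces the factor `∫_ε^R r ^ (m + d - 1) dr`.
-/

open MeasureTheory Metric intervalIntegral
open scoped ENNReal

/-- Anisotropic dilation `Dil_t(ξ) = (t^{-a_1} ξ_1, …, t^{-a_d} ξ_d)`. -/
noncomputable def aDil {d : ℕ} (a : Fin d → ℝ) (t : ℝ) (ξ : EuclideanSpace ℝ (Fin d)) :
    EuclideanSpace ℝ (Fin d) :=
  WithLp.toLp 2 (fun j => t ^ (-(a j)) * ξ j)

open Set

theorem hasStrictFDerivAt_norm_rpow_of_ne_zero {E : Type*} [NormedAddCommGroup E]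
    [InnerProductSpace ℝ E] {x : E} (hx : x ≠ 0) (p : ℝ) :
    HasStrictFDerivAt (fun y : E => ‖y‖ ^ p) ((p * ‖x‖ ^ (p - 2)) • innerSL ℝ x) x := by
  convert! (hasStrictFDerivAt_norm_sq x).rpow_const (p := p / 2) (by simp [hx]) using 0
  simp_rw [← Real.rpow_natCast_mul (norm_nonneg _), ← Nat.cast_smul_eq_nsmul ℝ, smul_smul]
  ring_nf

lemma norm_inv_norm_smul {E : Type*} [NormedAddCommGroup E] [NormedSpace ℝ E] {x : E}
    (hx : x ≠ 0) : ‖‖x‖⁻¹ • x‖ = 1 := by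
  rw [norm_smul, norm_inv, norm_norm, inv_mul_cancel₀ (norm_ne_zero_iff.2 hx)]

section PolarCoordinates

variable {E F : Type*} [NormedAddCommGroup E] [InnerProductSpace ℝ E] [FiniteDimensional ℝ E]
  [MeasurableSpace E] [BorelSpace E] [NormedAddCommGroup F] [NormedSpace ℝ F]

theorem integral_indicator_Icc_rpow_volumeIoiPow (n : ℕ) (m : ℝ) {ε R : ℝ} (hε : 0 < ε)
    (hεR : ε ≤ R) :
    ∫ r : Ioi (0 : ℝ), (Icc ε R).indicator (· ^ m) (r : ℝ) ∂Measure.volumeIoiPow n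
      = ∫ r in ε..R, r ^ (m + n) := by
  calc _ = ∫ r in Ioi 0, (Icc ε R).indicator (· ^ (m + n)) r := by
        simp only [Measure.volumeIoiPow, ENNReal.ofReal]
        rw [integral_withDensity_eq_integral_smul
            (measurable_subtype_coe.pow_const _).real_toNNReal,
          integral_subtype_comap measurableSet_Ioi fun r =>
            (r ^ n).toNNReal • (Icc ε R).indicator (· ^ m) r]
        refine setIntegral_congr_fun measurableSet_Ioi fun r (hr : 0 < r) => ?_
        by_cases hrεR : r ∈ Icc ε R
        · rw [indicator_of_mem hrεR, indicator_of_mem hrεR, NNReal.smul_def,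
            Real.coe_toNNReal _ (by positivity), smul_eq_mul, ← Real.rpow_natCast,
            ← Real.rpow_add hr, add_comm]
        · rw [indicator_of_notMem hrεR, indicator_of_notMem hrεR, smul_zero]
    _ = ∫ r in Icc ε R, r ^ (m + n) := by
        rw [setIntegral_indicator measurableSet_Icc,
          inter_eq_right.2 fun r (hr : r ∈ Icc ε R) => mem_Ioi.2 (hε.trans_le hr.1)]
    _ = _ := by rw [integral_Icc_eq_integral_Ioc, integral_of_le hεR]

theorem integral_preimage_norm_Icc_of_homogeneous [Nontrivial E] (μ : Measure E)
    [μ.IsAddHaarMeasure] {m ε R : ℝ} (hε : 0 < ε) (hεR : ε ≤ R) {f : E → F}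
    {g : sphere (0 : E) 1 → F}
    (hf : ∀ r : ℝ, 0 < r → ∀ ζ : sphere (0 : E) 1, f (r • ζ) = r ^ m • g ζ) :
    ∫ x in norm ⁻¹' Icc ε R, f x ∂μ
      = (∫ r in ε..R, r ^ (m + Module.finrank ℝ E - 1)) • ∫ ζ, g ζ ∂μ.toSphere := by
  have hA : MeasurableSet (norm ⁻¹' Icc ε R : Set E) := measurableSet_Icc.preimage measurable_norm
  calc ∫ x in norm ⁻¹' Icc ε R, f x ∂μ
      = ∫ x : ({0}ᶜ : Set E), (norm ⁻¹' Icc ε R).indicator f x ∂μ.comap (↑) := by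
        rw [integral_subtype_comap (measurableSet_singleton _).compl, restrict_compl_singleton,
          MeasureTheory.integral_indicator hA]
    _ = ∫ p : sphere (0 : E) 1 × Ioi (0 : ℝ),
          (norm ⁻¹' Icc ε R).indicator f ((p.2 : ℝ) • (p.1 : E))
          ∂μ.toSphere.prod (Measure.volumeIoiPow (Module.finrank ℝ E - 1)) := by
        rw [← μ.measurePreserving_homeomorphUnitSphereProd.integral_comp
          (homeomorphUnitSphereProd E).measurableEmbedding]
        congr 1 with x
        rw [← homeomorphUnitSphereProd_symm_apply_coe, Homeomorph.symm_apply_apply]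
    _ = ∫ p : sphere (0 : E) 1 × Ioi (0 : ℝ), (Icc ε R).indicator (· ^ m) (p.2 : ℝ) • g p.1
          ∂μ.toSphere.prod (Measure.volumeIoiPow (Module.finrank ℝ E - 1)) := by
        congr 1 with ⟨ζ, r, hr⟩
        have hnorm : ‖r • (ζ : E)‖ = r := by simp [norm_smul, abs_of_pos (mem_Ioi.1 hr)]
        by_cases hrεR : r ∈ Icc ε R
        · rw [indicator_of_mem (by rwa [mem_preimage, hnorm]), indicator_of_mem hrεR, hf r hr]
        · rw [indicator_of_notMem (by rwa [mem_preimage, hnorm]), indicator_of_notMem hrεR,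
            zero_smul]
    _ = _ := by
        have hswap := integral_prod_swap (μ := Measure.volumeIoiPow (Module.finrank ℝ E - 1))
          (ν := μ.toSphere) fun q => (Icc ε R).indicator (· ^ m) (q.1 : ℝ) • g q.2
        simp only [Prod.fst_swap, Prod.snd_swap] at hswap
        rw [hswap,
          integral_prod_smul (fun r : Ioi (0 : ℝ) => (Icc ε R).indicator (· ^ m) (r : ℝ)) g,
          integral_indicator_Icc_rpow_volumeIoiPow _ m hε hεR, Nat.cast_pred Module.finrank_pos,
          add_sub_assoc]
end PolarCoordinates


section Anisotropic

variable {d : ℕ} (a : Fin d → ℝ)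

local notation "𝔼" => EuclideanSpace ℝ (Fin d)

@[simp]
lemma aDil_apply (t : ℝ) (ξ : 𝔼) (j : Fin d) : aDil a t ξ j = t ^ (-a j) * ξ j := rfl

@[simp]
lemma aDil_zero (t : ℝ) : aDil a t 0 = 0 := by
  ext j
  simp

lemma aDil_aDil {s t : ℝ} (hs : 0 ≤ s) (ht : 0 ≤ t) (ξ : 𝔼) :
    aDil a s (aDil a t ξ) = aDil a (s * t) ξ := by
  ext j
  simp only [aDil_apply, Real.mul_rpow hs ht]
  ring

lemma aDil_one (ξ : 𝔼) : aDil a 1 ξ = ξ := by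
  ext j
  simp

lemma norm_sq_aDil {t : ℝ} (ht : 0 < t) (ξ : 𝔼) :
    ‖aDil a t ξ‖ ^ 2 = ∑ j, ξ j ^ 2 / t ^ (2 * a j) := by
  rw [EuclideanSpace.norm_sq_eq]
  refine Finset.sum_congr rfl fun j _ => ?_
  rw [Real.norm_eq_abs, sq_abs, aDil_apply, mul_pow, ← Real.rpow_natCast, ← Real.rpow_mul ht.le,
    show -a j * ((2 : ℕ) : ℝ) = -(2 * a j) by push_cast; ring, Real.rpow_neg ht.le, div_eq_inv_mul]

lemma aJ_nonneg (hapos : ∀ j, 0 < a j) (x : 𝔼) : 0 ≤ aJ a x :=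
  Finset.sum_nonneg fun j _ => mul_nonneg (hapos j).le (sq_nonneg _)

lemma aJ_smul (t : ℝ) (ζ : 𝔼) : aJ a (t • ζ) = t ^ 2 * aJ a ζ := by
  simp only [aJ, Finset.mul_sum, PiLp.smul_apply, smul_eq_mul]
  exact Finset.sum_congr rfl fun j _ => by ring

lemma strictAntiOn_sum_sq_div_rpow (hapos : ∀ j, 0 < a j) {ξ : 𝔼} (hξ : ξ ≠ 0) :
    StrictAntiOn (fun t : ℝ => ∑ j, ξ j ^ 2 / t ^ (2 * a j)) (Ioi 0) := by
  intro s (hs : 0 < s) t _ hst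
  obtain ⟨j, hj⟩ : ∃ j, ξ j ≠ 0 := by
    by_contra! h
    exact hξ (by ext j; simp [h j])
  refine Finset.sum_lt_sum (fun i _ => ?_) ⟨j, Finset.mem_univ _, ?_⟩
  · have := hapos i
    gcongr
  · have := hapos j
    gcongr

lemma eq_of_sum_sq_div_rpow_eq_one (hapos : ∀ j, 0 < a j) {ξ : 𝔼} (hξ : ξ ≠ 0) {s t : ℝ}
    (hs : 0 < s) (ht : 0 < t) (hξs : ∑ j, ξ j ^ 2 / s ^ (2 * a j) = 1)
    (hξt : ∑ j, ξ j ^ 2 / t ^ (2 * a j) = 1) : s = t :=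
  (strictAntiOn_sum_sq_div_rpow a hapos hξ).injOn hs ht (hξs.trans hξt.symm)

noncomputable def anisoMap (x : 𝔼) : 𝔼 := WithLp.toLp 2 fun j => ‖x‖ ^ (a j - 1) * x j

@[simp]
lemma anisoMap_apply (x : 𝔼) (j : Fin d) : anisoMap a x j = ‖x‖ ^ (a j - 1) * x j := rfl

lemma anisoMap_smul {r : ℝ} (hr : 0 < r) {ζ : 𝔼} (hζ : ‖ζ‖ = 1) :
    anisoMap a (r • ζ) = aDil a r⁻¹ ζ := by
  ext j
  rw [anisoMap_apply, norm_smul, hζ, Real.norm_of_nonneg hr.le, mul_one, PiLp.smul_apply,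
    smul_eq_mul, aDil_apply, Real.inv_rpow hr.le, Real.rpow_neg hr.le, inv_inv,
    Real.rpow_sub_one hr.ne']
  field_simp

lemma aDil_norm_anisoMap {x : 𝔼} (hx : x ≠ 0) : aDil a ‖x‖ (anisoMap a x) = ‖x‖⁻¹ • x := by
  have hx' : 0 < ‖x‖ := norm_pos_iff.2 hx
  calc aDil a ‖x‖ (anisoMap a x) = aDil a ‖x‖ (anisoMap a (‖x‖ • ‖x‖⁻¹ • x)) := by
        rw [smul_inv_smul₀ hx'.ne']
    _ = ‖x‖⁻¹ • x := by
        rw [anisoMap_smul a hx' (norm_inv_norm_smul hx), aDil_aDil a hx'.le (inv_nonneg.2 hx'.le),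
          mul_inv_cancel₀ hx'.ne', aDil_one]

lemma anisoMap_ne_zero {x : 𝔼} (hx : x ≠ 0) : anisoMap a x ≠ 0 := by
  have h : ‖aDil a ‖x‖ (anisoMap a x)‖ = 1 := by
    rw [aDil_norm_anisoMap a hx, norm_inv_norm_smul hx]
  rintro h0
  rw [h0, aDil_zero, norm_zero] at h
  exact zero_ne_one h

lemma sum_sq_anisoMap_div {x : 𝔼} (hx : x ≠ 0) :
    ∑ j, anisoMap a x j ^ 2 / ‖x‖ ^ (2 * a j) = 1 := by
  rw [← norm_sq_aDil a (norm_pos_iff.2 hx), aDil_norm_anisoMap a hx, norm_inv_norm_smul hx,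
    one_pow]

lemma injOn_anisoMap (hapos : ∀ j, 0 < a j) : InjOn (anisoMap a) {x : 𝔼 | x ≠ 0} := by
  intro x (hx : x ≠ 0) y (hy : y ≠ 0) hxy
  have hnorm : ‖x‖ = ‖y‖ :=
    eq_of_sum_sq_div_rpow_eq_one a hapos (anisoMap_ne_zero a hx) (norm_pos_iff.2 hx)
      (norm_pos_iff.2 hy) (sum_sq_anisoMap_div a hx) (hxy ▸ sum_sq_anisoMap_div a hy)
  have h := aDil_norm_anisoMap a hx
  rw [hxy, hnorm, aDil_norm_anisoMap a hy] at h
  exact smul_right_injective _ (inv_ne_zero (norm_ne_zero_iff.2 hy)) h.symm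

lemma image_anisoMap_preimage_norm_Icc (hapos : ∀ j, 0 < a j) {η : 𝔼 → ℝ}
    (hη : ∀ ξ : 𝔼, ξ ≠ 0 → 0 < η ξ ∧ ∑ j, ξ j ^ 2 / η ξ ^ (2 * a j) = 1) {ε R : ℝ} (hε : 0 < ε) :
    anisoMap a '' (norm ⁻¹' Icc ε R) = {ξ : 𝔼 | ξ ≠ 0 ∧ ε ≤ η ξ ∧ η ξ ≤ R} := by
  ext ξ
  constructor
  · rintro ⟨x, hxεR, rfl⟩
    have hx : x ≠ 0 := norm_pos_iff.1 (hε.trans_le hxεR.1)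
    have hGx := anisoMap_ne_zero a hx
    have hηGx : η (anisoMap a x) = ‖x‖ :=
      eq_of_sum_sq_div_rpow_eq_one a hapos hGx (hη _ hGx).1 (norm_pos_iff.2 hx) (hη _ hGx).2
        (sum_sq_anisoMap_div a hx)
    exact ⟨hGx, hηGx ▸ hxεR⟩
  · rintro ⟨hξ, hεη, hηR⟩
    obtain ⟨hηpos, hηξ⟩ := hη ξ hξ
    have hζ : ‖aDil a (η ξ) ξ‖ = 1 := by
      rw [← pow_eq_one_iff_of_nonneg (norm_nonneg _) two_ne_zero, norm_sq_aDil a hηpos, hηξ]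
    refine ⟨η ξ • aDil a (η ξ) ξ, ?_, ?_⟩
    · rw [mem_preimage, norm_smul, hζ, mul_one, Real.norm_of_nonneg hηpos.le]
      exact ⟨hεη, hηR⟩
    · rw [anisoMap_smul a hηpos hζ, aDil_aDil a (inv_nonneg.2 hηpos.le) hηpos.le,
        inv_mul_cancel₀ hηpos.ne', aDil_one]

noncomputable def anisoMapDeriv (x : 𝔼) : 𝔼 →L[ℝ] 𝔼 :=
  (PiLp.continuousLinearEquiv 2 ℝ fun _ : Fin d => ℝ).symm.toContinuousLinearMap.comp
    (ContinuousLinearMap.pi fun j => ‖x‖ ^ (a j - 1) • EuclideanSpace.proj j +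
      x j • (((a j - 1) * ‖x‖ ^ (a j - 1 - 2)) • innerSL ℝ x))

lemma hasFDerivAt_anisoMap {x : 𝔼} (hx : x ≠ 0) :
    HasFDerivAt (anisoMap a) (anisoMapDeriv a x) x := by
  refine (PiLp.continuousLinearEquiv 2 ℝ fun _ : Fin d => ℝ).symm.hasFDerivAt.comp x
    (hasFDerivAt_pi.2 fun j => ?_)
  exact (hasStrictFDerivAt_norm_rpow_of_ne_zero hx _).hasFDerivAt.mul
    (EuclideanSpace.proj j : 𝔼 →L[ℝ] ℝ).hasFDerivAt

lemma anisoMapDeriv_apply (x v : 𝔼) (k : Fin d) :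
    anisoMapDeriv a x v k
      = ‖x‖ ^ (a k - 1) * v k + x k * ((a k - 1) * ‖x‖ ^ (a k - 1 - 2) * inner ℝ x v) := rfl

lemma toMatrix_anisoMapDeriv {x : 𝔼} (hx : x ≠ 0) :
    LinearMap.toMatrix (EuclideanSpace.basisFun (Fin d) ℝ).toBasis
        (EuclideanSpace.basisFun (Fin d) ℝ).toBasis (anisoMapDeriv a x)
      = Matrix.diagonal (fun k => ‖x‖ ^ (a k - 1)) *
          (1 + Matrix.replicateCol Unit (fun k => (a k - 1) * x k / ‖x‖ ^ 2) *
            Matrix.replicateRow Unit (fun j => x j)) := by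
  have hx' : 0 < ‖x‖ := norm_pos_iff.2 hx
  ext k j
  rw [LinearMap.toMatrix_apply, OrthonormalBasis.coe_toBasis, EuclideanSpace.basisFun_apply,
    OrthonormalBasis.coe_toBasis_repr_apply, EuclideanSpace.basisFun_repr, Matrix.diagonal_mul,
    ContinuousLinearMap.coe_coe, anisoMapDeriv_apply, EuclideanSpace.inner_single_right,
    Real.rpow_sub hx' (a k - 1) 2, Real.rpow_two]
  simp only [PiLp.single_apply, conj_trivial, one_mul, Matrix.add_apply, Matrix.one_apply,
    Matrix.mul_apply, Matrix.replicateCol_apply, Matrix.replicateRow_apply, Finset.univ_unique,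
    Finset.sum_singleton]
  split_ifs <;> field_simp

lemma det_anisoMapDeriv (hasum : ∑ j, a j = d) {x : 𝔼} (hx : x ≠ 0) :
    (anisoMapDeriv a x).det = aJ a x / ‖x‖ ^ 2 := by
  have hx' : 0 < ‖x‖ := norm_pos_iff.2 hx
  rw [ContinuousLinearMap.det,
    ← LinearMap.det_toMatrix (EuclideanSpace.basisFun (Fin d) ℝ).toBasis,
    toMatrix_anisoMapDeriv a hx, Matrix.det_mul, Matrix.det_one_add_replicateCol_mul_replicateRow,
    Matrix.det_diagonal, ← Real.rpow_sum_of_pos hx']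
  have hexp : ∑ i, (a i - 1) = 0 := by simp [Finset.sum_sub_distrib, hasum]
  have hdot : (fun j => x j) ⬝ᵥ (fun k => (a k - 1) * x k / ‖x‖ ^ 2)
      = (aJ a x - ‖x‖ ^ 2) / ‖x‖ ^ 2 := by
    rw [EuclideanSpace.norm_sq_eq, aJ, ← Finset.sum_sub_distrib, Finset.sum_div]
    exact Finset.sum_congr rfl fun j _ => by rw [Real.norm_eq_abs, sq_abs]; ring
  rw [hexp, Real.rpow_zero, one_mul, hdot]
  field_simp
  ring

lemma aJ_div_norm_sq_mul_anisoMap_smul {m : ℝ} {Φ : 𝔼 → ℂ}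
    (hhom : ∀ t : ℝ, 0 < t → ∀ ξ : 𝔼, ξ ≠ 0 → Φ (aDil a t ξ) = ((t ^ (-m) : ℝ) : ℂ) * Φ ξ)
    {r : ℝ} (hr : 0 < r) (ζ : sphere (0 : 𝔼) 1) :
    ((aJ a (r • (ζ : 𝔼)) / ‖r • (ζ : 𝔼)‖ ^ 2 : ℝ) : ℂ) * Φ (anisoMap a (r • (ζ : 𝔼)))
      = r ^ m • (((aJ a ζ : ℝ) : ℂ) * Φ ζ) := by
  have hζ : ‖(ζ : 𝔼)‖ = 1 := mem_sphere_zero_iff_norm.1 ζ.2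
  rw [anisoMap_smul a hr hζ, hhom _ (inv_pos.2 hr) _ (ne_zero_of_mem_unit_sphere ζ),
    aJ_smul, norm_smul, hζ, Real.norm_of_nonneg hr.le, mul_one,
    mul_div_cancel_left₀ _ (pow_ne_zero 2 hr.ne'), Real.inv_rpow hr.le, Real.rpow_neg hr.le,
    inv_inv, Complex.real_smul]
  ring

end Anisotropic

theorem statement8_general (d : ℕ) (hd : 2 ≤ d)
    (a : Fin d → ℝ) (hapos : ∀ j, 0 < a j) (hasum : ∑ j, a j = d)
    (η : EuclideanSpace ℝ (Fin d) → ℝ)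
    (hη : ∀ ξ : EuclideanSpace ℝ (Fin d), ξ ≠ 0 →
      0 < η ξ ∧ ∑ j, (ξ j) ^ 2 / (η ξ) ^ (2 * a j) = 1)
    (m : ℝ) (Φ : EuclideanSpace ℝ (Fin d) → ℂ)
    (hhom : ∀ t : ℝ, 0 < t → ∀ ξ : EuclideanSpace ℝ (Fin d), ξ ≠ 0 →
      Φ (aDil a t ξ) = ((t ^ (-m) : ℝ) : ℂ) * Φ ξ)
    (ε R : ℝ) (hε : 0 < ε) (hεR : ε < R) :
    (∫ ξ in {ξ : EuclideanSpace ℝ (Fin d) | ξ ≠ 0 ∧ ε ≤ η ξ ∧ η ξ ≤ R}, Φ ξ)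
      = (((∫ r in ε..R, r ^ (m + d - 1) : ℝ) : ℝ) : ℂ) *
        ∫ ζ : sphere (0 : EuclideanSpace ℝ (Fin d)) 1,
          ((aJ a (ζ : EuclideanSpace ℝ (Fin d)) : ℝ) : ℂ) * Φ (ζ : EuclideanSpace ℝ (Fin d))
          ∂(volume : Measure (EuclideanSpace ℝ (Fin d))).toSphere
    ∧ (m = -(d : ℝ) → (∫ r in ε..R, r ^ (m + d - 1) : ℝ) = Real.log (R / ε)) := by
  have : Nonempty (Fin d) := ⟨⟨0, by omega⟩⟩
  refine ⟨?_, fun hm => ?_⟩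
  · have hA : MeasurableSet (norm ⁻¹' Icc ε R : Set (EuclideanSpace ℝ (Fin d))) :=
      measurableSet_Icc.preimage measurable_norm
    have hA0 : norm ⁻¹' Icc ε R ⊆ {x : EuclideanSpace ℝ (Fin d) | x ≠ 0} := fun x hx =>
      norm_pos_iff.1 (hε.trans_le hx.1)
    rw [← image_anisoMap_preimage_norm_Icc a hapos hη hε,
      integral_image_eq_integral_abs_det_fderiv_smul volume hA
        (fun x hx => (hasFDerivAt_anisoMap a (hA0 hx)).hasFDerivWithinAt)
        ((injOn_anisoMap a hapos).mono hA0),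
      setIntegral_congr_fun hA fun x hx => by
        rw [det_anisoMapDeriv a hasum (hA0 hx),
          abs_of_nonneg (div_nonneg (aJ_nonneg a hapos x) (sq_nonneg _)), Complex.real_smul],
      integral_preimage_norm_Icc_of_homogeneous volume hε hεR.le
        fun r hr ζ => aJ_div_norm_sq_mul_anisoMap_smul a hhom hr ζ,
      finrank_euclideanSpace_fin, Complex.real_smul]
  · rw [hm, neg_add_cancel, zero_sub]
    simp only [Real.rpow_neg_one]
    exact integral_inv_of_pos hε (hε.trans hεR)

/-- (Integration of truncated `a`-homogeneous functions.) If `Φ` is continuous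
away from the origin and `a`-homogeneous of order `m`, then for `0 < ε < R`,
`∫_{ε ≤ η(ξ) ≤ R} Φ(ξ) dξ = (∫_ε^R r^{m+d-1} dr) ⬝ ∫_{S^{d-1}} J(ζ) Φ(ζ) dσ(ζ)`;
for `m = -d` the first factor equals `log (R/ε)`. -/
theorem statement8 (d : ℕ) (hd : 2 ≤ d)
    (a : Fin d → ℝ) (hapos : ∀ j, 0 < a j) (hasum : ∑ j, a j = d)
    (η : EuclideanSpace ℝ (Fin d) → ℝ)
    (hη : ∀ ξ : EuclideanSpace ℝ (Fin d), ξ ≠ 0 →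
      0 < η ξ ∧ ∑ j, (ξ j) ^ 2 / (η ξ) ^ (2 * a j) = 1)
    (m : ℝ) (Φ : EuclideanSpace ℝ (Fin d) → ℂ)
    (hcont : ContinuousOn Φ {ξ : EuclideanSpace ℝ (Fin d) | ξ ≠ 0})
    (hhom : ∀ t : ℝ, 0 < t → ∀ ξ : EuclideanSpace ℝ (Fin d), ξ ≠ 0 →
      Φ (aDil a t ξ) = ((t ^ (-m) : ℝ) : ℂ) * Φ ξ)
    (ε R : ℝ) (hε : 0 < ε) (hεR : ε < R) :
    (∫ ξ in {ξ : EuclideanSpace ℝ (Fin d) | ξ ≠ 0 ∧ ε ≤ η ξ ∧ η ξ ≤ R}, Φ ξ)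
      = (((∫ r in ε..R, r ^ (m + d - 1) : ℝ) : ℝ) : ℂ) *
        ∫ ζ : sphere (0 : EuclideanSpace ℝ (Fin d)) 1,
          ((aJ a (ζ : EuclideanSpace ℝ (Fin d)) : ℝ) : ℂ) * Φ (ζ : EuclideanSpace ℝ (Fin d))
          ∂(volume : Measure (EuclideanSpace ℝ (Fin d))).toSphere
    ∧ (m = -(d : ℝ) → (∫ r in ε..R, r ^ (m + d - 1) : ℝ) = Real.log (R / ε)) :=
  statement8_general d hd a hapos hasum η hη m Φ hhom ε R hε hεR
end
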